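/- arXiv:2512.11803 — 10 statements merged into one kernel-verified Lean document; each statement's English description precedes it below -/
import Mathlib

section
/- Let (X,+) be an abelian group equipped with a translation-invariant metric d. If A ⊆ X is a nonempty compact set, then its spectre S(A) is compact. -/
/-- The spectre of a set `A` in an abelian group. -/
def spectre {X : Type*} [AddCommGroup X] (A : Set X) : Set X :=
  {z | ∀ x ∈ A, x + z ∈ A ∨ x - z ∈ A}

theorem isCompact_spectre {X : Type*} [AddCommGroup X] [MetricSpace X]
    (hd : ∀ x y z : X, dist (x + z) (y + z) = dist x y)
    (A : Set X) (hA : A.Nonempty) (hAc : IsCompact A) :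
    IsCompact (spectre A) := by
  -- negation is an isometry
  have hneg : ∀ x y : X, dist (-x) (-y) = dist x y := by
    intro x y
    have h := hd (-x) (-y) (x + y)
    have h1 : -x + (x + y) = y := by abel
    have h2 : -y + (x + y) = x := by abel
    rw [h1, h2] at h
    rw [← h, dist_comm]
  -- z ↦ x + z is continuous
  have haddc : ∀ x : X, Continuous (fun z : X => x + z) := by
    intro x
    apply Isometry.continuous
    intro z w
    simp only [edist_dist]
    congr 1
    calc dist (x + z) (x + w) = dist (z + x) (w + x) := by rw [add_comm x z, add_comm x w]
      _ = dist z w := hd z w x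
  -- z ↦ x - z is continuous
  have hsubc : ∀ x : X, Continuous (fun z : X => x - z) := by
    intro x
    apply Isometry.continuous
    intro z w
    simp only [edist_dist]
    congr 1
    calc dist (x - z) (x - w) = dist (-z + x) (-w + x) := by
          congr 1 <;> abel
      _ = dist (-z) (-w) := hd (-z) (-w) x
      _ = dist z w := hneg z w
  have hAcl : IsClosed A := hAc.isClosed
  -- spectre A is closed
  have hclosed : IsClosed (spectre A) := by
    have : spectre A = ⋂ x ∈ A, ((fun z : X => x + z) ⁻¹' A ∪ (fun z : X => x - z) ⁻¹' A) := by
      ext z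
      simp [spectre, Set.mem_iInter]
    rw [this]
    exact isClosed_biInter fun x _ =>
      ((hAcl.preimage (haddc x)).union (hAcl.preimage (hsubc x)))
  -- spectre A is contained in a compact set
  obtain ⟨a, ha⟩ := hA
  have hsub : spectre A ⊆ ((fun y : X => y - a) '' A) ∪ ((fun y : X => a - y) '' A) := by
    intro z hz
    rcases hz a ha with h | h
    · left; exact ⟨a + z, h, add_sub_cancel_left a z⟩
    · right; exact ⟨a - z, h, sub_sub_cancel a z⟩
  have hsub1c : Continuous (fun y : X => y - a) := by
    apply Isometry.continuous
    intro z w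
    simp only [edist_dist]
    congr 1
    calc dist (z - a) (w - a) = dist (z + -a) (w + -a) := by rw [sub_eq_add_neg, sub_eq_add_neg]
      _ = dist z w := hd z w (-a)
  have hK : IsCompact (((fun y : X => y - a) '' A) ∪ ((fun y : X => a - y) '' A)) :=
    (hAc.image hsub1c).union (hAc.image (hsubc a))
  exact hK.of_isClosed_subset hclosed hsub
end

section
/- Let (X,+) be an abelian group and let x, y ∈ X be such that x + y ≠ 0, x ≠ 0 and 2x ≠ 0 (i.e., the order of x is at least 3). Then there is no set B ⊆ X with S(B) = {0, x, y}. In particular, the spectre operator on subsets of X is not surjective onto the subsets of X containing 0. -/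
lemma neg_mem_spectre {X : Type*} [AddCommGroup X] {A : Set X} {z : X}
    (hz : z ∈ spectre A) : -z ∈ spectre A := by
  intro b hb
  rcases hz b hb with h | h
  · right; simpa [sub_neg_eq_add] using h
  · left; simpa [sub_eq_add_neg] using h

theorem spectre_not_surjective {X : Type*} [AddCommGroup X] (x y : X)
    (hxy : x + y ≠ 0) (hx : x ≠ 0) (h2x : x + x ≠ 0) :
    (¬ ∃ B : Set X, spectre B = ({0, x, y} : Set X)) ∧
    ¬ (∀ C : Set X, (0 : X) ∈ C → ∃ B : Set X, spectre B = C) := by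
  have main : ¬ ∃ B : Set X, spectre B = ({0, x, y} : Set X) := by
    rintro ⟨B, hB⟩
    have hxmem : x ∈ spectre B := by rw [hB]; simp
    have hnx : -x ∈ ({0, x, y} : Set X) := hB ▸ neg_mem_spectre hxmem
    rcases hnx with h | h | h
    · exact hx (by simpa using neg_eq_zero.mp h)
    · exact h2x (by rw [← neg_eq_iff_add_eq_zero]; exact h)
    · exact hxy (by rw [← h]; simp)
  exact ⟨main, fun h => main (h _ (by simp))⟩
end

section
/- Let X be a vector space over ℝ such that the cardinality of a Hamel basis of X over ℚ (i.e., the dimension of X as a ℚ-vector space) equals the cardinality of X. Let A ⊆ X be a set such that 0 ∈ A and for every x ∈ A also −x ∈ A. Then there exists a set B ⊆ X such that S(B) = A, where the spectre is taken with respect to the additive group (X,+). -/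
/-!
Put `B := Fᶜ`. Then `z ∈ S(B)` exactly when `y + z ∈ F` and `y - z ∈ F` force `y ∈ F`, so it
suffices to find `F ⊆ X` closed under this rule for `z ∈ A` and violating it for every `z ∉ A`.

Enumerate `X` as `(e i)` along a well-order of type `#X`. As `dim_ℚ X = #X`, transfinite recursion
gives a vector `x i` outside the span `V i` of the earlier `x j` and of the `e j`, `j ≤ i`. Let `F`
consist of the `f` with leading term `q • x i` (that is, `f - q • x i ∈ V i`) where `e i ∉ A`,
`0 < q ≤ 1`, and `q = 1` only for `f = x i ± e i`. If `y ± a ∈ F`, the leading term of `y` is half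
that of `y + a` or of `y - a`, whichever has the larger index, or the average of both if the
indices agree; coefficient `1` then forces `y ± a = x i ± e i`, which for `a ∈ A = -A` leaves only
`y = x i ± e i`. Finally `x i ± e i ∈ F` for `e i ∉ A`, while no `x j` lies in `F`.
-/

open Cardinal Set Submodule

universe u

theorem mem_spectre_compl_iff {X : Type*} [AddCommGroup X] {F : Set X} {z : X} :
    z ∈ spectre Fᶜ ↔ ∀ y, y + z ∈ F → y - z ∈ F → y ∈ F := by
  simp only [spectre, mem_ofPred_eq, mem_compl_iff]
  exact forall_congr' fun y => by tauto

theorem WellFoundedLT.exists_forall_of_forall_exists {α β : Type*} [Preorder α]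
    [WellFoundedLT α] {P : (a : α) → (Iio a → β) → β → Prop} (h : ∀ a g, ∃ b, P a g b) :
    ∃ f : α → β, ∀ a, P a (fun b => f b) (f a) := by
  choose c hc using h
  refine ⟨WellFoundedLT.fix fun a g => c a fun b => g b b.2, fun a => ?_⟩
  rw [WellFoundedLT.fix_eq]
  exact hc _ _

section Rank

variable {K X : Type*} [AddCommGroup X]

theorem exists_notMem_span_of_mk_lt_rank [Ring K] [StrongRankCondition K] [Module K X]
    {S : Set X} (hS : #S < Module.rank K X) : ∃ v, v ∉ span K S := by
  by_contra! h
  have htop : span K S = ⊤ := eq_top_iff'.2 h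
  have := rank_span_le (R := K) S
  rw [htop, rank_top] at this
  exact this.not_gt hS

theorem aleph0_le_mk_of_rank_eq_mk [DivisionRing K] [Infinite K] [Module K X]
    (h : Module.rank K X = #X) : ℵ₀ ≤ #X := by
  have : Nontrivial X := rank_pos_iff_nontrivial.1 (h ▸ pos_iff_ne_zero.2 (mk_ne_zero X))
  have := Module.Free.infinite K X
  exact aleph0_le_mk X

end Rank

structure IsFreshFamily {ι K X : Type*} [Preorder ι] [AddCommGroup X] [Semiring K] [Module K X]
    (e x : ι → X) (V : ι → Submodule K X) : Prop where
  self_mem : ∀ i, e i ∈ V i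
  notMem : ∀ i, x i ∉ V i
  mem_of_lt : ∀ {i j}, i < j → x i ∈ V j
  mono : Monotone V

theorem exists_isFreshFamily {K : Type*} {ι X : Type u} [LinearOrder ι] [WellFoundedLT ι]
    [AddCommGroup X] [DivisionRing K] [Module K X] (e : ι → X) (hX : ℵ₀ ≤ Module.rank K X)
    (hι : ∀ i : ι, #(Iio i) < Module.rank K X) :
    ∃ (x : ι → X) (V : ι → Submodule K X), IsFreshFamily e x V := by
  have hsmall : ∀ i (g : Iio i → X), #(range g ∪ e '' Iic i : Set X) < Module.rank K X := by
    intro i g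
    have hIic : #(Iic i) < Module.rank K X := by
      rw [← Iio_insert]
      exact mk_insert_le.trans_lt (add_lt_of_lt hX (hι i) (one_lt_aleph0.trans_le hX))
    exact (mk_union_le _ _).trans_lt (add_lt_of_lt hX (mk_range_le.trans_lt (hι i))
      (mk_image_le.trans_lt hIic))
  obtain ⟨x, hx⟩ := WellFoundedLT.exists_forall_of_forall_exists fun i g =>
    exists_notMem_span_of_mk_lt_rank (hsmall i g)
  refine ⟨x, fun i => span K (x '' Iio i ∪ e '' Iic i), ⟨fun i => ?_, fun i => ?_, ?_, ?_⟩⟩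
  · exact subset_span (Or.inr (mem_image_of_mem e self_mem_Iic))
  · simpa only [image_eq_range] using hx i
  · exact fun hij => subset_span (Or.inl (mem_image_of_mem x hij))
  · exact fun i j hij => span_mono (union_subset_union (image_mono (Iio_subset_Iio hij))
      (image_mono (Iic_subset_Iic.2 hij)))

namespace IsFreshFamily

variable {ι K X : Type*} [Preorder ι] [AddCommGroup X] [DivisionRing K] [Module K X]
  {e x : ι → X} {V : ι → Submodule K X}

theorem eq_of_sub_smul_mem (hV : IsFreshFamily e x V) {f : X} {i : ι} {q₁ q₂ : K}
    (h₁ : f - q₁ • x i ∈ V i) (h₂ : f - q₂ • x i ∈ V i) : q₁ = q₂ := by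
  by_contra hne
  have := sub_mem h₁ h₂
  rw [sub_sub_sub_cancel_left, ← sub_smul] at this
  exact hV.notMem i (((V i).smul_mem_iff (sub_ne_zero.2 (Ne.symm hne))).1 this)

theorem mem_of_sub_smul_mem_of_lt (hV : IsFreshFamily e x V) {f : X} {i j : ι} {q : K}
    (hij : i < j) (h : f - q • x i ∈ V i) : f ∈ V j := by
  have := add_mem (hV.mono hij.le h) (smul_mem _ q (hV.mem_of_lt hij))
  rwa [sub_add_cancel] at this

end IsFreshFamily

def forbidden {ι K X : Type*} [AddCommGroup X] [Semiring K] [PartialOrder K] [Module K X]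
    (A : Set X) (e x : ι → X) (V : ι → Submodule K X) : Set X :=
  {f | ∃ i, e i ∉ A ∧ ∃ q : K, 0 < q ∧ q ≤ 1 ∧ f - q • x i ∈ V i ∧
    (q = 1 → f = x i + e i ∨ f = x i - e i)}

namespace IsFreshFamily

variable {ι K X : Type*} [LinearOrder ι] [AddCommGroup X] [Field K] [LinearOrder K] [Module K X]
  {A : Set X} {e x : ι → X} {V : ι → Submodule K X}

theorem add_mem_forbidden [IsStrictOrderedRing K] (hV : IsFreshFamily e x V) {i : ι}
    (hi : e i ∉ A) : x i + e i ∈ forbidden A e x V :=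
  ⟨i, hi, 1, one_pos, le_rfl, by simpa only [one_smul, add_sub_cancel_left] using hV.self_mem i,
    fun _ => Or.inl rfl⟩

theorem sub_mem_forbidden [IsStrictOrderedRing K] (hV : IsFreshFamily e x V) {i : ι}
    (hi : e i ∉ A) : x i - e i ∈ forbidden A e x V :=
  ⟨i, hi, 1, one_pos, le_rfl,
    by simpa only [one_smul, sub_sub_cancel_left] using neg_mem (hV.self_mem i),
    fun _ => Or.inr rfl⟩

theorem apply_notMem_forbidden (hV : IsFreshFamily e x V) (hA : 0 ∈ A) (j : ι) :
    x j ∉ forbidden A e x V := by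
  rintro ⟨i, hi, q, hq, -, hmem, hq₁⟩
  rcases lt_trichotomy j i with hji | rfl | hij
  · exact hq.ne' (hV.eq_of_sub_smul_mem hmem (by simpa using hV.mem_of_lt hji))
  · have he : e j = 0 := by
      rcases hq₁ (hV.eq_of_sub_smul_mem hmem (by simp)) with h | h
      · exact left_eq_add.1 h
      · exact sub_eq_self.1 h.symm
    exact hi (he ▸ hA)
  · exact hV.notMem j (hV.mem_of_sub_smul_mem_of_lt hij hmem)

theorem two_inv_smul_add_mem_forbidden_of_lt [IsStrictOrderedRing K] (hV : IsFreshFamily e x V)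
    {f g : X} {i j : ι} {q₁ q₂ : K} (hij : i < j) (hf : f - q₁ • x i ∈ V i) (hj : e j ∉ A)
    (hq₂ : 0 < q₂) (hq₂' : q₂ ≤ 1) (hg : g - q₂ • x j ∈ V j) :
    (2⁻¹ : K) • (f + g) ∈ forbidden A e x V := by
  refine ⟨j, hj, 2⁻¹ * q₂, by positivity, by linarith, ?_, fun h => by linarith⟩
  convert smul_mem (V j) (2⁻¹ : K) (add_mem (hV.mem_of_sub_smul_mem_of_lt hij hf) hg) using 1
  module

theorem mem_forbidden_of_add_mem_of_sub_mem [IsStrictOrderedRing K] (hV : IsFreshFamily e x V)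
    (hA : ∀ a ∈ A, -a ∈ A) {y a : X} (ha : a ∈ A) (h₁ : y + a ∈ forbidden A e x V)
    (h₂ : y - a ∈ forbidden A e x V) : y ∈ forbidden A e x V := by
  obtain ⟨i, hi, q₁, hq₁, hq₁', hf, hf₁⟩ := h₁
  obtain ⟨j, hj, q₂, hq₂, hq₂', hg, hg₁⟩ := h₂
  have hy : y = (2⁻¹ : K) • ((y + a) + (y - a)) := by module
  rcases lt_trichotomy i j with hij | rfl | hji
  · rw [hy]
    exact hV.two_inv_smul_add_mem_forbidden_of_lt hij hf hj hq₂ hq₂' hg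
  · refine ⟨i, hi, 2⁻¹ * (q₁ + q₂), by positivity, by linarith, ?_, fun h => ?_⟩
    · convert smul_mem (V i) (2⁻¹ : K) (add_mem hf hg) using 1
      module
    · have ha' : (2⁻¹ : K) • ((y + a) - (y - a)) ∈ A := by convert ha using 1; module
      rcases hf₁ (by linarith) with hf₁ | hf₁ <;> rcases hg₁ (by linarith) with hg₁ | hg₁ <;>
        rw [hf₁, hg₁] at hy ha'
      · exact Or.inl (hy.trans (by module))
      · exact absurd (by convert ha' using 1; module) hi
      · exact absurd (by convert hA _ ha' using 1; module) hi
      · exact Or.inr (hy.trans (by module))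
  · rw [hy, add_comm]
    exact hV.two_inv_smul_add_mem_forbidden_of_lt hji hg hi hq₁ hq₁' hf

end IsFreshFamily

theorem exists_set_with_spectre_general {X : Type*} [AddCommGroup X]
    [Module ℚ X]
    (hcard : Module.rank ℚ X = Cardinal.mk X)
    (A : Set X) (h0 : (0 : X) ∈ A) (hsym : ∀ x ∈ A, -x ∈ A) :
    ∃ B : Set X, spectre B = A := by
  obtain ⟨e⟩ : Nonempty ((#X).ord.ToType ≃ X) := Cardinal.eq.1 (mk_ord_toType #X)
  obtain ⟨x, V, hV⟩ : ∃ x V, IsFreshFamily e x V := by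
    refine exists_isFreshFamily (K := ℚ) e ?_ fun i => ?_ <;> rw [hcard]
    · exact aleph0_le_mk_of_rank_eq_mk hcard
    · simpa using mk_Iio_lt i
  refine ⟨(forbidden A e x V)ᶜ, Set.ext fun z => ?_⟩
  rw [mem_spectre_compl_iff]
  refine ⟨fun hz => ?_, fun hz _ => hV.mem_forbidden_of_add_mem_of_sub_mem hsym hz⟩
  by_contra hzA
  obtain ⟨i, rfl⟩ := e.surjective z
  exact hV.apply_notMem_forbidden h0 i
    (hz _ (hV.add_mem_forbidden hzA) (hV.sub_mem_forbidden hzA))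

theorem exists_set_with_spectre {X : Type*} [AddCommGroup X] [Module ℝ X]
    [Module ℚ X] [IsScalarTower ℚ ℝ X]
    (hcard : Module.rank ℚ X = Cardinal.mk X)
    (A : Set X) (h0 : (0 : X) ∈ A) (hsym : ∀ x ∈ A, -x ∈ A) :
    ∃ B : Set X, spectre B = A :=
  exists_set_with_spectre_general hcard A h0 hsym
end

section
/- There exists an uncountable set A ⊆ [0,1] which is non-sliding, i.e., for every real number t ≠ 0 the intersection A ∩ (A + t) contains at most one point. -/
/-! A `ℚ`-linearly independent set `A` is non-sliding: `x = a + t` and `y = b + t` with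
`a, b, x, y ∈ A` give the relation `x - a = y - b`, which independence only allows if `x = y`
or `x = a`, and the latter means `t = 0`. Extracting a `ℚ`-basis of `ℝ` from `[0, 1]`, which
spans `ℝ` over `ℚ`, yields such a set inside `[0, 1]`; it is uncountable because a countable
set spans only a countable subspace. -/

open Set Submodule

theorem LinearIndependent.eq_or_eq_of_sub_eq_sub {ι R M : Type*} [Ring R] [CharZero R]
    [AddCommGroup M] [Module R M] {v : ι → M} (hv : LinearIndependent R v) {i j k l : ι}
    (h : v i - v j = v k - v l) : (i = k ∧ j = l) ∨ (i = j ∧ k = l) := by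
  have hsum : Finsupp.linearCombination R v (Finsupp.single i 1 + Finsupp.single l 1) =
      Finsupp.linearCombination R v (Finsupp.single k 1 + Finsupp.single j 1) := by
    simp only [map_add, Finsupp.linearCombination_single, one_smul]
    rw [← sub_eq_sub_iff_add_eq_add, h]
  rcases (Finsupp.single_add_single_eq_single_add_single one_ne_zero one_ne_zero).mp
    (hv hsum) with ⟨hik, hlj⟩ | ⟨-, hij, hlk⟩ | ⟨htwo, -⟩
  · exact .inl ⟨hik, hlj.symm⟩
  · exact .inr ⟨hij, hlk.symm⟩
  · exact absurd htwo (by norm_num)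

theorem LinearIndependent.subsingleton_inter_image_add_right {R M : Type*} [Ring R] [CharZero R]
    [AddCommGroup M] [Module R M] {A : Set M} (hA : LinearIndependent R ((↑) : A → M))
    {t : M} (ht : t ≠ 0) : (A ∩ ((fun a => a + t) '' A)).Subsingleton := by
  rintro _ ⟨hx, a, ha, rfl⟩ _ ⟨hy, b, hb, rfl⟩
  have h : ((⟨a + t, hx⟩ : A) : M) - (⟨a, ha⟩ : A) =
      ((⟨b + t, hy⟩ : A) : M) - (⟨b, hb⟩ : A) := by
    simp
  rcases hA.eq_or_eq_of_sub_eq_sub h with ⟨hxy, -⟩ | ⟨hxa, -⟩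
  · exact congrArg Subtype.val hxy
  · exact absurd (by simpa using congrArg Subtype.val hxa) ht

theorem Submodule.not_countable_of_span_eq_top {R M : Type*} [Semiring R] [Countable R]
    [AddCommMonoid M] [Module R M] [Uncountable M] {s : Set M} (hs : span R s = ⊤) :
    ¬ s.Countable := by
  intro hcount
  have : Countable s := hcount.to_subtype
  have : Countable (span R (range ((↑) : s → M))) := inferInstance
  rw [Subtype.range_coe, hs] at this
  exact not_countable (Countable.of_equiv _ (topEquiv (R := R) (M := M)).toEquiv)

theorem span_rat_Icc_zero_one : span ℚ (Icc (0 : ℝ) 1) = ⊤ := by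
  refine eq_top_iff.mpr fun x _ => ?_
  have hone : (1 : ℝ) ∈ span ℚ (Icc (0 : ℝ) 1) := subset_span ⟨zero_le_one, le_rfl⟩
  have hfract : Int.fract x ∈ span ℚ (Icc (0 : ℝ) 1) :=
    subset_span ⟨Int.fract_nonneg x, (Int.fract_lt_one x).le⟩
  have hx : x = ((⌊x⌋ : ℚ) • (1 : ℝ)) + Int.fract x := by
    rw [Rat.smul_def, mul_one, Rat.cast_intCast, Int.floor_add_fract]
  rw [hx]
  exact add_mem (smul_mem _ _ hone) hfract

theorem exists_uncountable_nonSliding :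
    ∃ A : Set ℝ, A ⊆ Set.Icc 0 1 ∧ ¬ A.Countable ∧
      ∀ t : ℝ, t ≠ 0 → (A ∩ ((fun a => a + t) '' A)).Subsingleton := by
  obtain ⟨A, hA01, hspan, hA⟩ := exists_linearIndependent ℚ (Icc (0 : ℝ) 1)
  rw [span_rat_Icc_zero_one] at hspan
  exact ⟨A, hA01, not_countable_of_span_eq_top hspan,
    fun _ ht => hA.subsingleton_inter_image_add_right ht⟩
end

section
/- Let (X,+) be an abelian group equipped with a translation-invariant metric d, and let A ⊆ X be a net-set. Then the spectre operator S is continuous at A as a map on nonempty compact subsets of X with the Hausdorff distance: for every ε > 0 there exists δ > 0 such that for every nonempty compact set B ⊆ X with d_H(A,B) < δ one has d_H(S(A), S(B)) < ε. -/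
open Metric

/-- A net-set: a finite set with at least three elements such that distinct two-element
subsets yield disjoint difference pairs. -/
def IsNetSet {X : Type*} [AddCommGroup X] (A : Set X) : Prop :=
  A.Finite ∧ 3 ≤ A.ncard ∧
    ∀ z ∈ A, ∀ t ∈ A, ∀ u ∈ A, ∀ v ∈ A, z ≠ t → u ≠ v →
      ({z, t} : Set X) ≠ ({u, v} : Set X) →
      ({z - t, t - z} : Set X) ∩ ({v - u, u - v} : Set X) = ∅

section Aux

variable {X : Type*} [AddCommGroup X] [MetricSpace X]

lemma dist_neg_neg' (hd : ∀ x y z : X, dist (x + z) (y + z) = dist x y) (a b : X) :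
    dist (-a) (-b) = dist a b := by
  have h := hd (-a) (-b) (a + b)
  have h1 : -a + (a + b) = b := by abel
  have h2 : -b + (a + b) = a := by abel
  rw [h1, h2] at h
  rw [← h, dist_comm]

lemma dist_neg_eq (hd : ∀ x y z : X, dist (x + z) (y + z) = dist x y) (a b : X) :
    dist (-a) b = dist a (-b) := by
  rw [← dist_neg_neg' hd a (-b), neg_neg]

lemma dist_shift (hd : ∀ x y z : X, dist (x + z) (y + z) = dist x y) (z a a' : X) :
    dist z (a' - a) = dist (a + z) a' := by
  rw [← hd z (a' - a) a, sub_add_cancel, add_comm]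

/-- Three distinct elements from a set with `3 ≤ ncard`. -/
lemma exists_three (A : Set X) (hfin : A.Finite) (h3 : 3 ≤ A.ncard) :
    ∃ x ∈ A, ∃ y ∈ A, ∃ w ∈ A, x ≠ y ∧ x ≠ w ∧ y ≠ w := by
  classical
  haveI := hfin.fintype
  rw [Set.ncard_eq_toFinset_card'] at h3
  set F := A.toFinset with hF
  have h1 : F.Nonempty := Finset.card_pos.mp (by omega)
  obtain ⟨x, hx⟩ := h1
  have h2 : (F.erase x).Nonempty := by
    apply Finset.card_pos.mp
    have := Finset.card_erase_of_mem hx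
    omega
  obtain ⟨y, hy⟩ := h2
  have h3' : ((F.erase x).erase y).Nonempty := by
    apply Finset.card_pos.mp
    have e1 := Finset.card_erase_of_mem hx
    have e2 := Finset.card_erase_of_mem hy
    omega
  obtain ⟨w, hw⟩ := h3'
  have hyx : y ≠ x := Finset.ne_of_mem_erase hy
  have hwy : w ≠ y := Finset.ne_of_mem_erase hw
  have hwx : w ≠ x := Finset.ne_of_mem_erase (Finset.mem_of_mem_erase hw)
  refine ⟨x, ?_, y, ?_, w, ?_, hyx.symm, hwx.symm, hwy.symm⟩ <;>
    [skip; skip; skip] <;>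
    simp_all [Set.mem_toFinset, F]

/-- The key positive gap `γ` between differences of distinct pairs of a net-set. -/
lemma exists_gap (hd : ∀ x y z : X, dist (x + z) (y + z) = dist x y)
    (A : Set X) (hA : IsNetSet A) :
    ∃ γ > 0, ∀ z ∈ A, ∀ t ∈ A, ∀ u ∈ A, ∀ v ∈ A, z ≠ t → u ≠ v →
      ({z, t} : Set X) ≠ ({u, v} : Set X) → γ ≤ dist (z - t) (u - v) := by
  classical
  obtain ⟨hfin, h3, hnet⟩ := hA
  haveI := hfin.fintype
  set F := A.toFinset with hF
  have hmemF : ∀ x, x ∈ F ↔ x ∈ A := by intro x; simp [hF, Set.mem_toFinset]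
  set P : X × X × X × X → Prop := fun q =>
    q.1 ≠ q.2.1 ∧ q.2.2.1 ≠ q.2.2.2 ∧
      ({q.1, q.2.1} : Set X) ≠ ({q.2.2.1, q.2.2.2} : Set X) with hP
  set T : Finset (X × X × X × X) := (F ×ˢ F ×ˢ F ×ˢ F).filter P with hT
  have hmemT : ∀ q : X × X × X × X, q ∈ T ↔
      (q.1 ∈ A ∧ q.2.1 ∈ A ∧ q.2.2.1 ∈ A ∧ q.2.2.2 ∈ A) ∧ P q := by
    intro q
    simp [hT, Finset.mem_filter, Finset.mem_product, hmemF, and_assoc]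
  have hTne : T.Nonempty := by
    obtain ⟨x, hx, y, hy, w, hw, hxy, hxw, hyw⟩ := exists_three A hfin h3
    refine ⟨(y, x, w, x), ?_⟩
    rw [hmemT]
    refine ⟨⟨hy, hx, hw, hx⟩, hxy.symm, hxw.symm, ?_⟩
    intro h
    have : y ∈ ({w, x} : Set X) := by rw [← h]; left; rfl
    rcases this with h' | h'
    · exact hyw h'
    · exact hxy h'.symm
  set f : X × X × X × X → ℝ := fun q => dist (q.1 - q.2.1) (q.2.2.1 - q.2.2.2) with hf
  refine ⟨T.inf' hTne f, ?_, ?_⟩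
  · show (0 : ℝ) < T.inf' hTne f
    rw [Finset.lt_inf'_iff]
    intro q hq
    rw [hmemT] at hq
    obtain ⟨⟨hz, ht, hu, hv⟩, hzt, huv, hne⟩ := hq
    have hdisj := hnet _ hz _ ht _ hu _ hv hzt huv hne
    rw [dist_pos]
    intro heq
    have : q.1 - q.2.1 ∈ ({q.1 - q.2.1, q.2.1 - q.1} : Set X) ∩
        ({q.2.2.2 - q.2.2.1, q.2.2.1 - q.2.2.2} : Set X) := by
      constructor
      · left; rfl
      · right; exact heq
    rw [hdisj] at this
    exact this
  · intro z hz t ht u hu v hv hzt huv hne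
    have : (z, t, u, v) ∈ T := by
      rw [hmemT]; exact ⟨⟨hz, ht, hu, hv⟩, hzt, huv, hne⟩
    exact Finset.inf'_le f this

/-- Core quantitative lemma: if `z` approximately shifts every element of the
net-set `A` into `A`, then `z` is close to `0`. -/
lemma core_lemma (hd : ∀ x y z : X, dist (x + z) (y + z) = dist x y)
    (A : Set X) (hA : IsNetSet A) {γ : ℝ}
    (hγkey : ∀ z ∈ A, ∀ t ∈ A, ∀ u ∈ A, ∀ v ∈ A, z ≠ t → u ≠ v →
      ({z, t} : Set X) ≠ ({u, v} : Set X) → γ ≤ dist (z - t) (u - v))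
    {η : ℝ} (hη : 0 < η) (hηγ : 2 * η ≤ γ) (z : X)
    (H : ∀ a ∈ A, ∃ a' ∈ A, dist z (a' - a) < η ∨ dist (-z) (a' - a) < η) :
    dist z 0 < η := by
  classical
  -- normalize the `-z` case
  have H' : ∀ a ∈ A, ∃ a' ∈ A, dist z (a' - a) < η ∨ dist z (a - a') < η := by
    intro a ha
    obtain ⟨a', ha', h⟩ := H a ha
    refine ⟨a', ha', ?_⟩
    rcases h with h | h
    · exact Or.inl h
    · right
      rwa [dist_neg_eq hd, neg_sub] at h
  choose! f hf1 hf2 using H'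
  by_cases h0 : ∃ a ∈ A, f a = a
  · obtain ⟨a, ha, hfa⟩ := h0
    have := hf2 a ha
    rw [hfa, sub_self] at this
    rcases this with h | h <;> exact h
  · push_neg at h0
    exfalso
    -- all pairs {a, f a} must coincide
    have key : ∀ a ∈ A, ∀ b ∈ A, ({a, f a} : Set X) ≠ ({b, f b} : Set X) → False := by
      intro a ha b hb hne
      have hfa := hf1 a ha
      have hfb := hf1 b hb
      have hfaa := h0 a ha
      have hfbb := h0 b hb
      have hda := hf2 a ha
      have hdb := hf2 b hb
      have tri : ∀ w1 w2 : X, dist z w1 < η → dist z w2 < η → dist w1 w2 < γ := by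
        intro w1 w2 h1 h2
        calc dist w1 w2 ≤ dist w1 z + dist z w2 := dist_triangle _ _ _
        _ < η + η := by rw [dist_comm w1 z]; exact add_lt_add h1 h2
        _ ≤ γ := by linarith
      have pairne1 : ({f a, a} : Set X) ≠ ({f b, b} : Set X) := by
        rw [Set.pair_comm (f a) a, Set.pair_comm (f b) b]; exact hne
      have pairne2 : ({f a, a} : Set X) ≠ ({b, f b} : Set X) := by
        rw [Set.pair_comm (f a) a]; exact hne
      have pairne3 : ({a, f a} : Set X) ≠ ({f b, b} : Set X) := by
        rw [Set.pair_comm (f b) b]; exact hne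
      rcases hda with h1 | h1 <;> rcases hdb with h2 | h2
      · exact absurd (hγkey _ hfa _ ha _ hfb _ hb hfaa hfbb pairne1)
          (not_le.mpr (tri _ _ h1 h2))
      · exact absurd (hγkey _ hfa _ ha _ hb _ hfb hfaa (Ne.symm hfbb) pairne2)
          (not_le.mpr (tri _ _ h1 h2))
      · exact absurd (hγkey _ ha _ hfa _ hfb _ hb (Ne.symm hfaa) hfbb pairne3)
          (not_le.mpr (tri _ _ h1 h2))
      · exact absurd (hγkey _ ha _ hfa _ hb _ hfb (Ne.symm hfaa) (Ne.symm hfbb) hne)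
          (not_le.mpr (tri _ _ h1 h2))
    obtain ⟨x, hx, y, hy, w, hw, hxy, hxw, hyw⟩ := exists_three A hA.1 hA.2.1
    have exy : ({x, f x} : Set X) = ({y, f y} : Set X) := by
      by_contra h; exact key x hx y hy h
    have exw : ({x, f x} : Set X) = ({w, f w} : Set X) := by
      by_contra h; exact key x hx w hw h
    have hy' : y ∈ ({x, f x} : Set X) := by rw [exy]; left; rfl
    have hw' : w ∈ ({x, f x} : Set X) := by rw [exw]; left; rfl
    have hyfx : y = f x := by
      rcases hy' with h | h
      · exact absurd h.symm hxy
      · exact h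
    have hwfx : w = f x := by
      rcases hw' with h | h
      · exact absurd h.symm hxw
      · exact h
    exact hyw (hyfx.trans hwfx.symm)

/-- The spectre of a net-set is `{0}`. -/
lemma spectre_netSet (hd : ∀ x y z : X, dist (x + z) (y + z) = dist x y)
    (A : Set X) (hA : IsNetSet A) {γ : ℝ} (hγpos : 0 < γ)
    (hγkey : ∀ z ∈ A, ∀ t ∈ A, ∀ u ∈ A, ∀ v ∈ A, z ≠ t → u ≠ v →
      ({z, t} : Set X) ≠ ({u, v} : Set X) → γ ≤ dist (z - t) (u - v)) :
    spectre A = {0} := by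
  ext z
  simp only [Set.mem_singleton_iff]
  constructor
  · intro hz
    have hlt : ∀ t > 0, dist z 0 < t := by
      intro t ht
      set η := min t (γ / 2) with hη
      have hηpos : 0 < η := lt_min ht (by linarith)
      have hηγ : 2 * η ≤ γ := by
        have : η ≤ γ / 2 := min_le_right _ _
        linarith
      have := core_lemma hd A hA hγkey hηpos hηγ z ?_
      · exact lt_of_lt_of_le this (min_le_left _ _)
      · intro a ha
        rcases hz a ha with h | h
        · exact ⟨a + z, h, Or.inl (by rw [add_sub_cancel_left]; simpa using hηpos)⟩
        · refine ⟨a - z, h, Or.inr ?_⟩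
          have : a - z - a = -z := by abel
          rw [this]
          simpa using hηpos
    have : dist z 0 ≤ 0 := by
      by_contra h
      push_neg at h
      exact absurd (hlt _ h) (lt_irrefl _)
    rw [dist_le_zero] at this
    exact this
  · intro hz
    intro x hx
    left
    rw [hz, add_zero]
    exact hx

end Aux

theorem spectre_continuous_at_netSet {X : Type*} [AddCommGroup X] [MetricSpace X]
    (hd : ∀ x y z : X, dist (x + z) (y + z) = dist x y)
    (A : Set X) (hA : IsNetSet A) :
    ∀ ε > 0, ∃ δ > 0, ∀ B : Set X, B.Nonempty → IsCompact B →
      hausdorffDist A B < δ → hausdorffDist (spectre A) (spectre B) < ε := by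
  obtain ⟨γ, hγpos, hγkey⟩ := exists_gap hd A hA
  intro ε hε
  set δ := min ε γ / 8 with hδdef
  have hδpos : 0 < δ := by
    have : 0 < min ε γ := lt_min hε hγpos
    positivity
  refine ⟨δ, hδpos, ?_⟩
  intro B hBne hBc hdist
  have hAne : A.Nonempty := Set.nonempty_of_ncard_ne_zero (by have := hA.2.1; omega)
  have hedist : EMetric.hausdorffEdist A B ≠ ⊤ :=
    Metric.hausdorffEdist_ne_top_of_nonempty_of_bounded hAne hBne
      hA.1.isBounded hBc.isBounded
  have hδγ : 2 * (2 * δ) ≤ γ := by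
    have : min ε γ ≤ γ := min_le_right _ _
    rw [hδdef]; linarith
  -- every element of `spectre B` is within `2δ` of `0`
  have hspecB : ∀ z ∈ spectre B, dist z 0 < 2 * δ := by
    intro z hz
    apply core_lemma hd A hA hγkey (by linarith) hδγ
    intro a ha
    obtain ⟨b, hb, hab⟩ := exists_dist_lt_of_hausdorffDist_lt ha hdist hedist
    rcases hz b hb with h | h
    · obtain ⟨a', ha', ha'b⟩ := exists_dist_lt_of_hausdorffDist_lt' h hdist hedist
      rw [dist_comm] at ha'b
      refine ⟨a', ha', Or.inl ?_⟩
      rw [dist_shift hd]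
      calc dist (a + z) a' ≤ dist (a + z) (b + z) + dist (b + z) a' := dist_triangle _ _ _
      _ = dist a b + dist (b + z) a' := by rw [hd]
      _ < δ + δ := add_lt_add hab ha'b
      _ = 2 * δ := by ring
    · obtain ⟨a', ha', ha'b⟩ := exists_dist_lt_of_hausdorffDist_lt' h hdist hedist
      rw [dist_comm] at ha'b
      refine ⟨a', ha', Or.inr ?_⟩
      rw [dist_shift hd]
      have hsub : ∀ c : X, c + -z = c - z := fun c => (sub_eq_add_neg c z).symm
      rw [hsub]
      calc dist (a - z) a' ≤ dist (a - z) (b - z) + dist (b - z) a' := dist_triangle _ _ _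
      _ = dist a b + dist (b - z) a' := by
            rw [sub_eq_add_neg a z, sub_eq_add_neg b z, hd]
      _ < δ + δ := add_lt_add hab ha'b
      _ = 2 * δ := by ring
  have hzeroB : (0 : X) ∈ spectre B := by
    intro x hx; left; rw [add_zero]; exact hx
  have hsA : spectre A = {0} := spectre_netSet hd A hA hγpos hγkey
  have hle : hausdorffDist (spectre A) (spectre B) ≤ 2 * δ := by
    rw [hsA]
    refine hausdorffDist_le_of_mem_dist (r := 2 * δ) (by linarith) ?_ ?_
    · intro x hx
      rw [Set.mem_singleton_iff] at hx
      subst hx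
      exact ⟨0, hzeroB, by rw [dist_self]; linarith⟩
    · intro z hz
      exact ⟨0, Set.mem_singleton 0, le_of_lt (hspecB z hz)⟩
  have : 2 * δ < ε := by
    have h1 : min ε γ ≤ ε := min_le_left _ _
    rw [hδdef]; linarith
  linarith
end

section
/- Let (X,+) be an abelian group equipped with a translation-invariant metric d such that every nonempty open ball in X contains infinitely many elements. Then the family of net-sets in X is dense in the hyperspace of nonempty compact subsets of X with the Hausdorff distance: for every nonempty compact set K ⊆ X and every ε > 0 there exists a net-set A ⊆ X with d_H(A,K) < ε. -/
open Metric

/-!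
Net-sets are built one point at a time, each new point `a` taken in a small ball around a point
`f` of a finite net of `K`. A coincidence of differences in which `a` occurs once puts `a` in the
finite set `A + A - A`, which the infinite ball lets us avoid. One in which `a` occurs twice reads
`a + a = x + y` with `x ≠ y` old points; the solutions of `a + a = c` may form an infinite coset of
the 2-torsion, so this is excluded metrically instead: the old points keep `x + y ≠ f + f` for
every centre `f` still to come, and `a` is taken so close to `f` that `a + a` stays away from all
the sums `x + y`.
-/

open Pointwise

def DiffDeterminesPair {X : Type*} [AddCommGroup X] (A : Set X) : Prop :=
  ∀ z ∈ A, ∀ t ∈ A, ∀ u ∈ A, ∀ v ∈ A, z ≠ t → z - t = u - v → z = u ∧ t = v ∨ z = v ∧ t = u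

section Algebra

variable {X : Type*} [AddCommGroup X] {A : Set X}

theorem DiffDeterminesPair.isNetSet (hA : DiffDeterminesPair A) (hfin : A.Finite)
    (hcard : 3 ≤ A.ncard) : IsNetSet A := by
  refine ⟨hfin, hcard, fun z hz t ht u hu v hv hzt _ hne => ?_⟩
  rw [Set.eq_empty_iff_forall_notMem]
  rintro w ⟨hw₁, hw₂⟩
  simp only [Set.mem_insert_iff, Set.mem_singleton_iff] at hw₁ hw₂
  apply hne
  rw [Set.pair_eq_pair_iff]
  rcases hw₁ with rfl | rfl <;> rcases hw₂ with h | h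
  · exact (hA z hz t ht v hv u hu hzt h).symm
  · exact hA z hz t ht u hu v hv hzt h
  · exact (hA t ht z hz v hv u hu hzt.symm h).imp And.symm And.symm
  · exact (hA t ht z hz u hu v hv hzt.symm h).symm.imp And.symm And.symm

theorem DiffDeterminesPair.insert {a : X} (hA : DiffDeterminesPair A)
    (hsum : ∀ x ∈ A, ∀ y ∈ A, ∀ z ∈ A, a ≠ x + y - z)
    (hdouble : ∀ x ∈ A, ∀ y ∈ A, a + a = x + y → x = y) :
    DiffDeterminesPair (insert a A) := by
  intro z hz t ht u hu v hv hzt h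
  rcases hz with rfl | hz <;> rcases ht with rfl | ht <;> rcases hu with rfl | hu <;>
    rcases hv with rfl | hv
  all_goals first
    | exact hA z hz t ht u hu v hv hzt h
    | grind

end Algebra

section TranslationInvariant

variable {X : Type*} [AddCommGroup X] [MetricSpace X]

theorem dist_add_add_le_of_add_right_invariant
    (hd : ∀ x y z : X, dist (x + z) (y + z) = dist x y) (a b c d : X) :
    dist (a + b) (c + d) ≤ dist a c + dist b d :=
  calc dist (a + b) (c + d) ≤ dist (a + b) (c + b) + dist (c + b) (c + d) := dist_triangle _ _ _
    _ = dist a c + dist b d := by rw [hd, add_comm c b, add_comm c d, hd]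

theorem exists_insert_diffDeterminesPair
    (hd : ∀ x y z : X, dist (x + z) (y + z) = dist x y)
    (hball : ∀ (x : X) (r : ℝ), 0 < r → (Metric.ball x r).Infinite)
    {A D : Set X} (hAfin : A.Finite) (hDfin : D.Finite)
    (hA : DiffDeterminesPair A) (hAD : ∀ x ∈ A, ∀ y ∈ A, x ≠ y → x + y ∉ D)
    {f : X} (hf : f + f ∈ D) {δ : ℝ} (hδ : 0 < δ) :
    ∃ a ∉ A, dist a f < δ ∧ DiffDeterminesPair (insert a A) ∧
      ∀ x ∈ insert a A, ∀ y ∈ insert a A, x ≠ y → x + y ∉ D := by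
  set T := (fun p : X × X => p.1 + p.2) '' A.offDiag
  have hfT : f + f ∉ T := by
    rintro ⟨⟨x, y⟩, ⟨hx, hy, hxy⟩, hxyf⟩
    exact hAD x hx y hy hxy (by rwa [← hxyf] at hf)
  obtain ⟨ρ, hρ, hρT⟩ := Metric.isOpen_iff.1 (hAfin.offDiag.image _).isClosed.isOpen_compl _ hfT
  have hS : (A + A - A ∪ (D - A)).Finite := ((hAfin.add hAfin).sub hAfin).union (hDfin.sub hAfin)
  obtain ⟨a, ha, haS⟩ := ((hball f (min δ (ρ / 2)) (by positivity)).sdiff hS).nonempty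
  have haf : dist a f < min δ (ρ / 2) := mem_ball.1 ha
  have hsum : ∀ x ∈ A, ∀ y ∈ A, ∀ z ∈ A, a ≠ x + y - z := fun x hx y hy z hz h =>
    haS (Or.inl (h ▸ Set.sub_mem_sub (Set.add_mem_add hx hy) hz))
  have haA : a ∉ A := fun h => hsum a h a h a h (add_sub_cancel_right a a).symm
  have hdouble : ∀ x ∈ A, ∀ y ∈ A, a + a = x + y → x = y := by
    intro x hx y hy h
    by_contra hxy
    refine hρT ?_ ⟨(x, y), ⟨hx, hy, hxy⟩, h.symm⟩
    have := dist_add_add_le_of_add_right_invariant hd a a f f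
    rw [mem_ball]
    linarith [min_le_right δ (ρ / 2)]
  refine ⟨a, haA, haf.trans_le (min_le_left _ _), hA.insert hsum hdouble, ?_⟩
  have hsumD : ∀ y ∈ A, a + y ∉ D := fun y hy h =>
    haS (Or.inr (Set.mem_sub.2 ⟨a + y, h, y, hy, add_sub_cancel_right a y⟩))
  rintro x (rfl | hx) y (rfl | hy) hxy
  · exact absurd rfl hxy
  · exact hsumD y hy
  · rw [add_comm]
    exact hsumD x hx
  · exact hAD x hx y hy hxy

theorem exists_diffDeterminesPair_near_list
    (hd : ∀ x y z : X, dist (x + z) (y + z) = dist x y)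
    (hball : ∀ (x : X) (r : ℝ), 0 < r → (Metric.ball x r).Infinite)
    {D : Set X} (hDfin : D.Finite) {δ : ℝ} (hδ : 0 < δ) :
    ∀ L : List X, (∀ f ∈ L, f + f ∈ D) → ∃ A : Set X, A.Finite ∧ A.ncard = L.length ∧
      DiffDeterminesPair A ∧ (∀ x ∈ A, ∀ y ∈ A, x ≠ y → x + y ∉ D) ∧
      (∀ a ∈ A, ∃ f ∈ L, dist a f < δ) ∧ ∀ f ∈ L, ∃ a ∈ A, dist a f < δ
  | [], _ => ⟨∅, Set.finite_empty, by simp, by simp [DiffDeterminesPair], by simp, by simp, by simp⟩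
  | f :: L, hL => by
    obtain ⟨A, hAfin, hcard, hA, hAD, hAL, hLA⟩ :=
      exists_diffDeterminesPair_near_list hd hball hDfin hδ L fun g hg =>
        hL g (List.mem_cons_of_mem f hg)
    obtain ⟨a, haA, haf, hA', hAD'⟩ :=
      exists_insert_diffDeterminesPair hd hball hAfin hDfin hA hAD (hL f List.mem_cons_self) hδ
    refine ⟨insert a A, hAfin.insert a, ?_, hA', hAD', ?_, ?_⟩
    · rw [Set.ncard_insert_of_notMem haA hAfin, hcard, List.length_cons]
    · rintro b (rfl | hb)
      · exact ⟨f, List.mem_cons_self, haf⟩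
      · obtain ⟨g, hg, hbg⟩ := hAL b hb
        exact ⟨g, List.mem_cons_of_mem f hg, hbg⟩
    · intro g hg
      rcases List.mem_cons.1 hg with rfl | hg
      · exact ⟨a, Set.mem_insert a A, haf⟩
      · obtain ⟨b, hb, hbg⟩ := hLA g hg
        exact ⟨b, Set.mem_insert_of_mem a hb, hbg⟩

theorem exists_isNetSet_near_list
    (hd : ∀ x y z : X, dist (x + z) (y + z) = dist x y)
    (hball : ∀ (x : X) (r : ℝ), 0 < r → (Metric.ball x r).Infinite)
    (L : List X) (hL : 3 ≤ L.length) {δ : ℝ} (hδ : 0 < δ) :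
    ∃ A : Set X, IsNetSet A ∧ (∀ a ∈ A, ∃ f ∈ L, dist a f < δ) ∧
      ∀ f ∈ L, ∃ a ∈ A, dist a f < δ := by
  obtain ⟨A, hAfin, hcard, hA, -, hAL, hLA⟩ :=
    exists_diffDeterminesPair_near_list hd hball (L.finite_toSet.image fun f => f + f) hδ L
      fun f hf => ⟨f, hf, rfl⟩
  exact ⟨A, hA.isNetSet hAfin (hcard ▸ hL), hAL, hLA⟩

end TranslationInvariant

theorem netSets_dense {X : Type*} [AddCommGroup X] [MetricSpace X]
    (hd : ∀ x y z : X, dist (x + z) (y + z) = dist x y)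
    (hball : ∀ (x : X) (r : ℝ), 0 < r → (Metric.ball x r).Infinite) :
    ∀ K : Set X, K.Nonempty → IsCompact K → ∀ ε > 0,
      ∃ A : Set X, IsNetSet A ∧ hausdorffDist A K < ε := by
  intro K ⟨k, hk⟩ hK ε hε
  obtain ⟨F, hFK, hFfin, hKF⟩ := hK.finite_cover_balls (div_pos hε three_pos)
  -- `k` is repeated so that `L` has three entries even when `K` is a point
  set L := k :: k :: k :: hFfin.toFinset.toList
  have hLK : ∀ f ∈ L, f ∈ K := by
    simp only [L, List.mem_cons, Finset.mem_toList, Set.Finite.mem_toFinset]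
    rintro f (rfl | rfl | rfl | hf) <;> first | exact hk | exact hFK hf
  obtain ⟨A, hA, hAL, hLA⟩ :=
    exists_isNetSet_near_list hd hball L (by simp [L]) (div_pos hε three_pos)
  refine ⟨A, hA, (hausdorffDist_le_of_mem_dist (r := 2 * ε / 3) (by positivity) ?_ ?_).trans_lt
    (by linarith)⟩
  · intro a ha
    obtain ⟨f, hf, haf⟩ := hAL a ha
    exact ⟨f, hLK f hf, by linarith⟩
  · intro x hx
    obtain ⟨f, hfF, hxf⟩ := Set.mem_iUnion₂.1 (hKF hx)
    obtain ⟨a, ha, haf⟩ := hLA f (by simp [L, hfF])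
    refine ⟨a, ha, ?_⟩
    calc dist x a ≤ dist x f + dist a f := dist_triangle_right x a f
      _ ≤ 2 * ε / 3 := by rw [mem_ball] at hxf; linarith
end

section
/- Let (X,+) be an abelian group equipped with a translation-invariant metric d such that X is complete and locally compact. Let A ⊆ X be a nonempty compact set with S(A) = {0}. Then the spectre operator S is continuous at A as a map on nonempty compact subsets of X with the Hausdorff distance: for every sequence (A_n) of nonempty compact subsets of X converging to A in d_H, the sequence (S(A_n)) converges to S(A) = {0} in d_H. -/
/-!
The spectre is upper semicontinuous at a compact set `A`: if `zₖ ∈ S(Bₖ)`, `Bₖ → A` and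
`zₖ → ζ`, then for each `x ∈ A` one of `x ± ζ` is a limit of points of `A`, so `ζ ∈ S(A)`.
Moreover `S(B)` lies within `2 d_H(B, A)` of the compact set `A - A`, so every sequence
`zₖ ∈ S(Bₖ)` has a convergent subsequence. Hence `S(Bₙ)` eventually lies in every
neighbourhood of `S(A) = {0}`, and since `0 ∈ S(Bₙ)` this is Hausdorff convergence to `{0}`.
-/

open Metric Filter

open Topology Pointwise

section PseudoMetricSpace

variable {α : Type*} [PseudoMetricSpace α] {s t : Set α} {x : α}

theorem IsCompact.exists_dist_le_hausdorffDist (ht : IsCompact t) (hx : x ∈ s)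
    (fin : hausdorffEDist s t ≠ ⊤) : ∃ y ∈ t, dist x y ≤ hausdorffDist s t := by
  obtain ⟨y, hy, hxy⟩ :=
    ht.exists_infDist_eq_dist (nonempty_of_hausdorffEDist_ne_top ⟨x, hx⟩ fin) x
  exact ⟨y, hy, hxy ▸ infDist_le_hausdorffDist_of_mem hx fin⟩

theorem Metric.hausdorffDist_singleton_le_of_subset_closedBall {r : ℝ} (hx : x ∈ s)
    (hs : s ⊆ closedBall x r) : hausdorffDist s {x} ≤ r :=
  hausdorffDist_le_of_mem_dist (dist_nonneg.trans (hs hx)) (fun _ hy => ⟨x, rfl, hs hy⟩)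
    fun _ hy => ⟨x, hx, hy ▸ hs hx⟩

theorem IsCompact.tendsto_subseq_of_tendsto_infDist (hK : IsCompact s) (hne : s.Nonempty)
    {u : ℕ → α} (hu : Tendsto (fun n => infDist (u n) s) atTop (𝓝 0)) :
    ∃ ζ ∈ s, ∃ ψ : ℕ → ℕ, StrictMono ψ ∧ Tendsto (u ∘ ψ) atTop (𝓝 ζ) := by
  choose p hps hp using fun n => hK.exists_infDist_eq_dist hne (u n)
  obtain ⟨ζ, hζ, ψ, hψ, hpψ⟩ := hK.tendsto_subseq hps
  refine ⟨ζ, hζ, ψ, hψ, hpψ.congr_dist ?_⟩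
  simpa only [Function.comp_def, hp, dist_comm] using hu.comp hψ.tendsto_atTop

end PseudoMetricSpace

section NormedAddCommGroup

variable {X : Type*} [NormedAddCommGroup X] {A B : Set X} {x z : X}

theorem zero_mem_spectre (A : Set X) : (0 : X) ∈ spectre A :=
  fun x hx => .inl (by rwa [add_zero])

theorem infDist_sub_le_of_mem_spectre (hA : IsCompact A) (hB : B.Nonempty)
    (fin : hausdorffEDist B A ≠ ⊤) (hz : z ∈ spectre B) :
    infDist z (A - A) ≤ 2 * hausdorffDist B A := by
  obtain ⟨x, hx⟩ := hB
  obtain ⟨b, hb, hxb⟩ := hA.exists_dist_le_hausdorffDist hx fin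
  rcases hz x hx with hxz | hxz
  · obtain ⟨a, ha, hxza⟩ := hA.exists_dist_le_hausdorffDist hxz fin
    calc infDist z (A - A) ≤ dist ((x + z) - x) (a - b) := by
          rw [add_sub_cancel_left]; exact infDist_le_dist_of_mem (Set.sub_mem_sub ha hb)
      _ ≤ dist (x + z) a + dist x b := dist_sub_sub_le _ _ _ _
      _ ≤ 2 * hausdorffDist B A := by linarith
  · obtain ⟨a, ha, hxza⟩ := hA.exists_dist_le_hausdorffDist hxz fin
    calc infDist z (A - A) ≤ dist (x - (x - z)) (b - a) := by
          rw [sub_sub_cancel]; exact infDist_le_dist_of_mem (Set.sub_mem_sub hb ha)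
      _ ≤ dist x b + dist (x - z) a := dist_sub_sub_le _ _ _ _
      _ ≤ 2 * hausdorffDist B A := by linarith

theorem min_infDist_le_of_mem_spectre (fin : hausdorffEDist B A ≠ ⊤) (hz : z ∈ spectre B)
    (hx : x ∈ A) : min (infDist (x + z) A) (infDist (x - z) A) ≤ 2 * hausdorffDist B A := by
  have fin' : hausdorffEDist A B ≠ ⊤ := by rwa [hausdorffEDist_comm]
  have hBne : B.Nonempty := nonempty_of_hausdorffEDist_ne_top ⟨x, hx⟩ fin'
  have hxB : infDist x B ≤ hausdorffDist B A :=
    hausdorffDist_comm (s := A) ▸ infDist_le_hausdorffDist_of_mem hx fin'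
  suffices min (infDist (x + z) A) (infDist (x - z) A) - hausdorffDist B A ≤ infDist x B by
    linarith
  refine (le_infDist hBne).2 fun y hy => sub_le_iff_le_add'.2 ?_
  rcases hz y hy with hyz | hyz
  · calc min (infDist (x + z) A) (infDist (x - z) A)
          ≤ infDist (x + z) A := min_le_left _ _
      _ ≤ infDist (y + z) A + dist (x + z) (y + z) := infDist_le_infDist_add_dist
      _ ≤ hausdorffDist B A + dist x y := by
          rw [dist_add_right]; gcongr; exact infDist_le_hausdorffDist_of_mem hyz fin
  · calc min (infDist (x + z) A) (infDist (x - z) A)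
          ≤ infDist (x - z) A := min_le_right _ _
      _ ≤ infDist (y - z) A + dist (x - z) (y - z) := infDist_le_infDist_add_dist
      _ ≤ hausdorffDist B A + dist x y := by
          rw [dist_sub_right]; gcongr; exact infDist_le_hausdorffDist_of_mem hyz fin

theorem mem_spectre_of_tendsto {ι : Type*} {l : Filter ι} [l.NeBot] (hA : IsClosed A)
    (hAne : A.Nonempty) {B : ι → Set X} (fin : ∀ i, hausdorffEDist (B i) A ≠ ⊤)
    (hB : Tendsto (fun i => hausdorffDist (B i) A) l (𝓝 0)) {z : ι → X}
    (hz : ∀ i, z i ∈ spectre (B i)) {ζ : X} (hζ : Tendsto z l (𝓝 ζ)) : ζ ∈ spectre A := by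
  intro x hx
  have hcont : Continuous fun w => min (infDist (x + w) A) (infDist (x - w) A) :=
    ((continuous_infDist_pt A).comp (continuous_const.add continuous_id)).min
      ((continuous_infDist_pt A).comp (continuous_const.sub continuous_id))
  have hle : min (infDist (x + ζ) A) (infDist (x - ζ) A) ≤ 0 :=
    le_of_tendsto_of_tendsto' ((hcont.tendsto ζ).comp hζ) (by simpa using hB.const_mul 2)
      fun i => min_infDist_le_of_mem_spectre (fin i) (hz i) hx
  rw [hA.mem_iff_infDist_zero hAne, hA.mem_iff_infDist_zero hAne]
  exact (min_le_iff.1 hle).imp (·.antisymm infDist_nonneg) (·.antisymm infDist_nonneg)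

theorem eventually_spectre_subset_of_tendsto (hA : IsCompact A) (hAne : A.Nonempty)
    {B : ℕ → Set X} (fin : ∀ n, hausdorffEDist (B n) A ≠ ⊤)
    (hB : Tendsto (fun n => hausdorffDist (B n) A) atTop (𝓝 0)) {U : Set X} (hU : IsOpen U)
    (hAU : spectre A ⊆ U) : ∀ᶠ n in atTop, spectre (B n) ⊆ U := by
  by_contra h
  obtain ⟨φ, hφ, hφU⟩ := extraction_of_frequently_atTop (not_eventually.1 h)
  choose z hz hzU using fun k => Set.not_subset.1 (hφU k)
  have hBφ : Tendsto (fun k => hausdorffDist (B (φ k)) A) atTop (𝓝 0) :=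
    hB.comp hφ.tendsto_atTop
  have hBne : ∀ n, (B n).Nonempty := fun n =>
    nonempty_of_hausdorffEDist_ne_top hAne (by rw [hausdorffEDist_comm]; exact fin n)
  have hzA : Tendsto (fun k => infDist (z k) (A - A)) atTop (𝓝 0) :=
    squeeze_zero (fun _ => infDist_nonneg)
      (fun k => infDist_sub_le_of_mem_spectre hA (hBne _) (fin _) (hz k))
      (by simpa using hBφ.const_mul 2)
  have hAA : IsCompact (A - A) := by simpa only [sub_eq_add_neg] using hA.add hA.neg
  obtain ⟨ζ, -, ψ, hψ, hzψ⟩ := hAA.tendsto_subseq_of_tendsto_infDist (hAne.sub hAne) hzA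
  have hζ : ζ ∈ spectre A := mem_spectre_of_tendsto hA.isClosed hAne (fun _ => fin _)
    (hBφ.comp hψ.tendsto_atTop) (fun k => hz (ψ k)) hzψ
  obtain ⟨k, hk⟩ := (hzψ.eventually (hU.mem_nhds (hAU hζ))).exists
  exact hzU (ψ k) hk

end NormedAddCommGroup

theorem spectre_continuous_of_trivial_spectre_general {X : Type*} [AddCommGroup X] [MetricSpace X]
    (hd : ∀ x y z : X, dist (x + z) (y + z) = dist x y)
    (A : Set X) (hAne : A.Nonempty) (hAc : IsCompact A)
    (hS : spectre A = ({0} : Set X)) :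
    ∀ Aseq : ℕ → Set X, (∀ n, (Aseq n).Nonempty) → (∀ n, IsCompact (Aseq n)) →
      Tendsto (fun n => hausdorffDist (Aseq n) A) atTop (nhds 0) →
      Tendsto (fun n => hausdorffDist (spectre (Aseq n)) (spectre A)) atTop (nhds 0) := by
  intro B hBne hBc hB
  let _ : Norm X := ⟨fun x => dist 0 x⟩
  let _ : NormedAddCommGroup X := .ofAddDist (fun _ => rfl) fun x y z => by
    rw [add_comm z x, add_comm z y, hd]
  have fin : ∀ n, hausdorffEDist (B n) A ≠ ⊤ := fun n =>
    hausdorffEDist_ne_top_of_nonempty_of_bounded (hBne n) hAne (hBc n).isBounded hAc.isBounded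
  rw [hS, Metric.tendsto_nhds]
  intro ε hε
  filter_upwards [eventually_spectre_subset_of_tendsto hAc hAne fin hB isOpen_ball
    (hS.trans_subset (Set.singleton_subset_iff.2 (mem_ball_self (half_pos hε))))] with n hn
  rw [Real.dist_0_eq_abs, abs_of_nonneg hausdorffDist_nonneg]
  exact (hausdorffDist_singleton_le_of_subset_closedBall (zero_mem_spectre _)
    (hn.trans ball_subset_closedBall)).trans_lt (half_lt_self hε)

theorem spectre_continuous_of_trivial_spectre {X : Type*} [AddCommGroup X] [MetricSpace X]
    [CompleteSpace X] [LocallyCompactSpace X]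
    (hd : ∀ x y z : X, dist (x + z) (y + z) = dist x y)
    (A : Set X) (hAne : A.Nonempty) (hAc : IsCompact A)
    (hS : spectre A = ({0} : Set X)) :
    ∀ Aseq : ℕ → Set X, (∀ n, (Aseq n).Nonempty) → (∀ n, IsCompact (Aseq n)) →
      Tendsto (fun n => hausdorffDist (Aseq n) A) atTop (nhds 0) →
      Tendsto (fun n => hausdorffDist (spectre (Aseq n)) (spectre A)) atTop (nhds 0) :=
  spectre_continuous_of_trivial_spectre_general hd A hAne hAc hS
end

section
/- Let ∑_n x_n be an absolutely convergent series in a Banach space X, and let E(x_n) := {∑_{n∈A} x_n : A ⊆ ℕ} be its achievement set. Suppose that for some k ∈ ℕ and j ∈ ℕ one has x_k = x_{k+1} = … = x_{k+2j−2}. Then j·x_k ∈ S(E(x_n)). -/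
/-- The achievement set of a series: the set of all its subsums. -/
def achievementSet {X : Type*} [AddCommGroup X] [TopologicalSpace X] (x : ℕ → X) : Set X :=
  {y | ∃ A : Set ℕ, y = ∑' n : A, x n}

/-!
The block `I = {k, …, k + 2j - 2}` has at least `2j - 1` indices, all carrying the value `x k`.
By pigeonhole, a set `A ⊆ ℕ` either contains `j` indices of `I`, and removing them turns the
subsum over `A` into that sum minus `j • x k`, or misses `j` indices of `I`, and adding them
gives that sum plus `j • x k`.
-/

open Finset

theorem Finset.exists_subset_card_eq_and_subset_or_disjoint {α : Type*} (s : Finset α)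
    (A : Set α) {j : ℕ} (hj : 2 * j ≤ #s + 1) :
    ∃ t ⊆ s, #t = j ∧ ((t : Set α) ⊆ A ∨ Disjoint A t) := by
  classical
  have hsplit := card_filter_add_card_filter_not (s := s) (· ∈ A)
  by_cases hin : j ≤ #(s.filter (· ∈ A))
  · obtain ⟨t, hts, rfl⟩ := exists_subset_card_eq hin
    exact ⟨t, hts.trans (filter_subset _ _), rfl,
      Or.inl fun i hi => (mem_filter.mp (hts hi)).2⟩
  · obtain ⟨t, hts, rfl⟩ :=
      exists_subset_card_eq (s := s.filter (· ∉ A)) (n := j) (by omega)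
    exact ⟨t, hts.trans (filter_subset _ _), rfl,
      Or.inr <| Set.disjoint_right.mpr fun i hi => (mem_filter.mp (hts hi)).2⟩

section AchievementSet

variable {X : Type*} [AddCommGroup X] [UniformSpace X] [IsUniformAddGroup X] [CompleteSpace X]
  [T2Space X] {x : ℕ → X}

theorem tsum_union_finset (hx : Summable x) {A : Set ℕ} {S : Finset ℕ} (hAS : Disjoint A S) :
    ∑' n : ↑(A ∪ S), x n = ∑' n : A, x n + ∑ i ∈ S, x i := by
  rw [(hx.subtype _).tsum_union_disjoint hAS (hx.subtype _), S.tsum_subtype']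

theorem tsum_add_sum_mem_achievementSet (hx : Summable x) {A : Set ℕ} {S : Finset ℕ}
    (hAS : Disjoint A S) : ∑' n : A, x n + ∑ i ∈ S, x i ∈ achievementSet x :=
  ⟨A ∪ S, (tsum_union_finset hx hAS).symm⟩

theorem tsum_sub_sum_mem_achievementSet (hx : Summable x) {A : Set ℕ} {S : Finset ℕ}
    (hSA : (S : Set ℕ) ⊆ A) : ∑' n : A, x n - ∑ i ∈ S, x i ∈ achievementSet x := by
  refine ⟨A \ S, ?_⟩
  rw [sub_eq_iff_eq_add, ← tsum_union_finset hx Set.disjoint_sdiff_left,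
    Set.sdiff_union_of_subset hSA]

end AchievementSet

theorem nsmul_mem_spectre_achievementSet_general {X : Type*} [NormedAddCommGroup X]
    [CompleteSpace X]
    (x : ℕ → X) (hx : Summable fun n => ‖x n‖)
    (k j : ℕ)
    (hconst : ∀ i, k ≤ i → i ≤ k + 2 * j - 2 → x i = x k) :
    j • x k ∈ spectre (achievementSet x) := by
  rintro _ ⟨A, rfl⟩
  have hcard : 2 * j ≤ #(Icc k (k + 2 * j - 2)) + 1 := by
    rw [Nat.card_Icc]
    omega
  obtain ⟨S, hSI, hScard, hSA⟩ :=
    (Icc k (k + 2 * j - 2)).exists_subset_card_eq_and_subset_or_disjoint A hcard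
  have hS : ∑ i ∈ S, x i = j • x k := by
    rw [sum_congr rfl fun i hi => hconst i (mem_Icc.mp (hSI hi)).1 (mem_Icc.mp (hSI hi)).2,
      sum_const, hScard]
  rcases hSA with hSA | hSA
  · exact .inr (hS ▸ tsum_sub_sum_mem_achievementSet hx.of_norm hSA)
  · exact .inl (hS ▸ tsum_add_sum_mem_achievementSet hx.of_norm hSA)

theorem nsmul_mem_spectre_achievementSet {X : Type*} [NormedAddCommGroup X]
    [NormedSpace ℝ X] [CompleteSpace X]
    (x : ℕ → X) (hx : Summable fun n => ‖x n‖)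
    (k j : ℕ) (hj : 1 ≤ j)
    (hconst : ∀ i, k ≤ i → i ≤ k + 2 * j - 2 → x i = x k) :
    j • x k ∈ spectre (achievementSet x) :=
  nsmul_mem_spectre_achievementSet_general x hx k j hconst
end

section
/- Let ((x_n,y_n))_{n∈ℕ} be a sequence in [0,∞)² such that the series ∑_n (x_n,y_n) converges, let E := E(x_n,y_n) be its achievement set in ℝ², and let k ∈ ℕ. Then: (a) if A := {n : x_n < x_k} satisfies x_k > ∑_{n∈A} x_n, then the interval (∑_{n∈A} x_n, x_k) is an x-gap of E; (b) if A := {n : y_n < y_k} satisfies y_k > ∑_{n∈A} y_n, then (∑_{n∈A} y_n, y_k) is a y-gap of E; (c) if {n : x_n < x_k} = {n : y_n < y_k} =: A and both x_k > ∑_{n∈A} x_n and y_k > ∑_{n∈A} y_n, then the set (∑_{n∈A} x_n, x_k) × (∑_{n∈A} y_n, y_k) is a rectangular gap of E. -/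
/-!
A subsum over `B` either only uses terms smaller than `x k`, and then it is at most the sum over
`{n | x n < x k}`, or it contains a term at least `x k`, and then by nonnegativity it is at least
`x k`. So no subsum lands strictly between these two values. For the rectangle, the two index
sets agree, so the same alternative holds in both coordinates at once: a subsum in the closed
rectangle is either at most its lower-left corner or at least its upper-right corner.
-/

/-- The achievement set of a series in the plane: the set of all its subsums. -/
def achv2 (x y : ℕ → ℝ) : Set (ℝ × ℝ) :=
  {p | ∃ A : Set ℕ, p = (∑' n : A, x n, ∑' n : A, y n)}

/-- `(a,b) × (c,d)` is a rectangular gap of `A`. -/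
def IsRectGap (A : Set (ℝ × ℝ)) (a b c d : ℝ) : Prop :=
  (Set.Icc a b ×ˢ Set.Icc c d) ∩ A = ({(a, c), (b, d)} : Set (ℝ × ℝ))

/-- `(a,b)` is an `x`-gap of `A`. -/
def IsXGap (A : Set (ℝ × ℝ)) (a b : ℝ) : Prop :=
  (∃ c, (a, c) ∈ A) ∧ (∃ d, (b, d) ∈ A) ∧ (Set.Ioo a b ×ˢ (Set.univ : Set ℝ)) ∩ A = ∅

/-- `(c,d)` is a `y`-gap of `A`. -/
def IsYGap (A : Set (ℝ × ℝ)) (c d : ℝ) : Prop :=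
  (∃ a, (a, c) ∈ A) ∧ (∃ b, (b, d) ∈ A) ∧ ((Set.univ : Set ℝ) ×ˢ Set.Ioo c d) ∩ A = ∅

section Subsums

variable {ι : Type*} {f : ι → ℝ}

lemma tsum_subtype_mono (hf0 : ∀ i, 0 ≤ f i) (hf : Summable f) {B C : Set ι} (h : B ⊆ C) :
    ∑' i : B, f i ≤ ∑' i : C, f i :=
  (hf.subtype B).tsum_le_tsum_of_inj (Set.inclusion h) (Set.inclusion_injective h)
    (fun c _ => hf0 c) (fun _ => le_rfl) (hf.subtype C)

lemma le_tsum_subtype (hf0 : ∀ i, 0 ≤ f i) (hf : Summable f) {B : Set ι} {m : ι} (hm : m ∈ B) :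
    f m ≤ ∑' i : B, f i :=
  (hf.subtype B).le_tsum ⟨m, hm⟩ fun j _ => hf0 j.1

lemma subset_setOf_lt_or_le_tsum_subtype (hf0 : ∀ i, 0 ≤ f i) (hf : Summable f) (k : ι)
    (B : Set ι) : B ⊆ {i | f i < f k} ∨ f k ≤ ∑' i : B, f i := by
  refine or_iff_not_imp_left.2 fun hB => ?_
  obtain ⟨m, hmB, hm⟩ := Set.not_subset.1 hB
  exact (not_lt.1 hm).trans (le_tsum_subtype hf0 hf hmB)

lemma tsum_subtype_notMem_Ioo (hf0 : ∀ i, 0 ≤ f i) (hf : Summable f) (k : ι) (B : Set ι) :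
    ∑' i : B, f i ∉ Set.Ioo (∑' i : {i | f i < f k}, f i) (f k) := by
  rintro ⟨hlow, hhigh⟩
  rcases subset_setOf_lt_or_le_tsum_subtype hf0 hf k B with hB | hB
  · exact (tsum_subtype_mono hf0 hf hB).not_gt hlow
  · exact hB.not_gt hhigh

end Subsums

lemma mem_achv2 (x y : ℕ → ℝ) (B : Set ℕ) : (∑' n : B, x n, ∑' n : B, y n) ∈ achv2 x y :=
  ⟨B, rfl⟩

lemma apply_mem_achv2 (x y : ℕ → ℝ) (k : ℕ) : (x k, y k) ∈ achv2 x y := by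
  simpa only [tsum_singleton] using mem_achv2 x y {k}

lemma isXGap_achv2 {x : ℕ → ℝ} (y : ℕ → ℝ) (hx0 : ∀ n, 0 ≤ x n) (hx : Summable x) (k : ℕ) :
    IsXGap (achv2 x y) (∑' n : {n | x n < x k}, x n) (x k) := by
  refine ⟨⟨_, mem_achv2 x y _⟩, ⟨_, apply_mem_achv2 x y k⟩, Set.eq_empty_of_forall_notMem ?_⟩
  rintro _ ⟨⟨hp, -⟩, B, rfl⟩
  exact tsum_subtype_notMem_Ioo hx0 hx k B hp

lemma isYGap_achv2 (x : ℕ → ℝ) {y : ℕ → ℝ} (hy0 : ∀ n, 0 ≤ y n) (hy : Summable y) (k : ℕ) :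
    IsYGap (achv2 x y) (∑' n : {n | y n < y k}, y n) (y k) := by
  refine ⟨⟨_, mem_achv2 x y _⟩, ⟨_, apply_mem_achv2 x y k⟩, Set.eq_empty_of_forall_notMem ?_⟩
  rintro _ ⟨⟨-, hp⟩, B, rfl⟩
  exact tsum_subtype_notMem_Ioo hy0 hy k B hp

lemma isRectGap_achv2 {x y : ℕ → ℝ} (hx0 : ∀ n, 0 ≤ x n) (hy0 : ∀ n, 0 ≤ y n) (hx : Summable x)
    (hy : Summable y) (k : ℕ) (hA : {n | x n < x k} = {n | y n < y k})
    (hxk : ∑' n : {n | x n < x k}, x n < x k) (hyk : ∑' n : {n | x n < x k}, y n < y k) :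
    IsRectGap (achv2 x y) (∑' n : {n | x n < x k}, x n) (x k)
      (∑' n : {n | x n < x k}, y n) (y k) := by
  apply Set.Subset.antisymm
  · rintro _ ⟨⟨⟨hx1, hx2⟩, hy1, hy2⟩, B, rfl⟩
    by_cases hB : B ⊆ {n | x n < x k}
    · left
      exact Prod.ext (le_antisymm (tsum_subtype_mono hx0 hx hB) hx1)
        (le_antisymm (tsum_subtype_mono hy0 hy hB) hy1)
    · right
      have hxB := (subset_setOf_lt_or_le_tsum_subtype hx0 hx k B).resolve_left hB
      have hyB := (subset_setOf_lt_or_le_tsum_subtype hy0 hy k B).resolve_left (hA ▸ hB)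
      exact Prod.ext (le_antisymm hx2 hxB) (le_antisymm hy2 hyB)
  · rintro _ (rfl | rfl)
    · exact ⟨⟨⟨le_rfl, hxk.le⟩, le_rfl, hyk.le⟩, mem_achv2 x y _⟩
    · exact ⟨⟨⟨hxk.le, le_rfl⟩, hyk.le, le_rfl⟩, apply_mem_achv2 x y k⟩

theorem first_gap_lemma_plane (x y : ℕ → ℝ) (hx0 : ∀ n, 0 ≤ x n) (hy0 : ∀ n, 0 ≤ y n)
    (hx : Summable x) (hy : Summable y) (k : ℕ) :
    ((∑' n : {n : ℕ | x n < x k}, x n) < x k →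
      IsXGap (achv2 x y) (∑' n : {n : ℕ | x n < x k}, x n) (x k)) ∧
    ((∑' n : {n : ℕ | y n < y k}, y n) < y k →
      IsYGap (achv2 x y) (∑' n : {n : ℕ | y n < y k}, y n) (y k)) ∧
    ({n : ℕ | x n < x k} = {n : ℕ | y n < y k} →
      (∑' n : {n : ℕ | x n < x k}, x n) < x k →
      (∑' n : {n : ℕ | x n < x k}, y n) < y k →
      IsRectGap (achv2 x y) (∑' n : {n : ℕ | x n < x k}, x n) (x k)
        (∑' n : {n : ℕ | x n < x k}, y n) (y k)) :=
  ⟨fun _ => isXGap_achv2 y hx0 hx k, fun _ => isYGap_achv2 x hy0 hy k,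
    isRectGap_achv2 hx0 hy0 hx hy k⟩
end

section
/- Let ((x_n,y_n))_{n∈ℕ} be a sequence in [0,∞)² such that the series ∑_n (x_n,y_n) converges, and let E := E(x_n,y_n) be its achievement set in ℝ². Assume (a,b)×(c,d) is a rectangular gap of E, and suppose the set {n ∈ ℕ : x_n ≥ b−a or y_n ≥ d−c} is nonempty, with maximum k. Then (b,d) ∈ F_k, and there exists f ∈ F_k such that (a,c) = f + ∑_{n>k} (x_n,y_n), where F_k := {∑_{n∈A}(x_n,y_n) : A ⊆ {1,2,…,k}}. -/
/-- The set of `k`-initial subsums (sums over sets of indices among the first `k+1`,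
i.e. indices `≤ k`). -/
def initialSubsums2 (x y : ℕ → ℝ) (k : ℕ) : Set (ℝ × ℝ) :=
  {p | ∃ A : Set ℕ, A ⊆ {n | n ≤ k} ∧ p = (∑' n : A, x n, ∑' n : A, y n)}

private lemma tsum_set_union_disj (x : ℕ → ℝ) (hx : Summable x) {A B : Set ℕ}
    (h : Disjoint A B) :
    ∑' n : ↥(A ∪ B), x n = (∑' n : A, x n) + ∑' n : B, x n := by
  rw [tsum_subtype, tsum_subtype, tsum_subtype, Set.indicator_union_of_disjoint h,
    Summable.tsum_add (hx.indicator A) (hx.indicator B)]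

private lemma tsum_set_remove (x : ℕ → ℝ) (hx : Summable x) {A : Set ℕ} {m : ℕ}
    (hm : m ∈ A) :
    ∑' n : A, x n = x m + ∑' n : (A \ {m} : Set ℕ), x n := by
  have hA : A = ({m} : Set ℕ) ∪ (A \ {m}) := by
    ext n
    simp only [Set.mem_union, Set.mem_singleton_iff, Set.mem_diff]
    constructor
    · intro hn
      by_cases h : n = m
      · exact Or.inl h
      · exact Or.inr ⟨hn, h⟩
    · rintro (rfl | ⟨hn, _⟩)
      · exact hm
      · exact hn
  have hd : Disjoint ({m} : Set ℕ) (A \ {m}) := by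
    simp [Set.disjoint_left]
  calc ∑' n : A, x n = ∑' n : (({m} : Set ℕ) ∪ (A \ {m}) : Set ℕ), x n := by rw [← hA]
    _ = x m + ∑' n : (A \ {m} : Set ℕ), x n := by
        rw [tsum_set_union_disj x hx hd, tsum_singleton]

private lemma tsum_set_insert (x : ℕ → ℝ) (hx : Summable x) {A : Set ℕ} {m : ℕ}
    (hm : m ∉ A) :
    ∑' n : (insert m A : Set ℕ), x n = x m + ∑' n : A, x n := by
  have hA : (insert m A : Set ℕ) = ({m} : Set ℕ) ∪ A := by
    ext n; simp
  have hd : Disjoint ({m} : Set ℕ) A := Set.disjoint_singleton_left.mpr hm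
  rw [hA, tsum_set_union_disj x hx hd, tsum_singleton]

private lemma tsum_set_congr_zero (x : ℕ → ℝ) {A B : Set ℕ} (hAB : A ⊆ B)
    (h : ∀ n ∈ B \ A, x n = 0) : ∑' n : A, x n = ∑' n : B, x n := by
  rw [tsum_subtype, tsum_subtype]
  apply tsum_congr
  intro n
  by_cases hnA : n ∈ A
  · rw [Set.indicator_of_mem hnA, Set.indicator_of_mem (hAB hnA)]
  · rw [Set.indicator_of_notMem hnA]
    by_cases hnB : n ∈ B
    · rw [Set.indicator_of_mem hnB, h n ⟨hnB, hnA⟩]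
    · rw [Set.indicator_of_notMem hnB]

theorem second_gap_lemma_plane (x y : ℕ → ℝ) (hx0 : ∀ n, 0 ≤ x n) (hy0 : ∀ n, 0 ≤ y n)
    (hx : Summable x) (hy : Summable y)
    (a b c d : ℝ) (hgap : IsRectGap (achv2 x y) a b c d)
    (k : ℕ) (hk : b - a ≤ x k ∨ d - c ≤ y k)
    (hkmax : ∀ n, (b - a ≤ x n ∨ d - c ≤ y n) → n ≤ k) :
    (b, d) ∈ initialSubsums2 x y k ∧
    ∃ f ∈ initialSubsums2 x y k,
      (a, c) = f + (∑' n : {n : ℕ | k < n}, x n, ∑' n : {n : ℕ | k < n}, y n) := by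
  have hsub : ({(a, c), (b, d)} : Set (ℝ × ℝ)) ⊆
      (Set.Icc a b ×ˢ Set.Icc c d) ∩ achv2 x y := by
    rw [hgap]
  have hacmem := hsub (show ((a, c) : ℝ × ℝ) ∈ _ by simp)
  have hbdmem := hsub (show ((b, d) : ℝ × ℝ) ∈ _ by simp)
  have hab : a ≤ b := hacmem.1.1.2
  have hcd : c ≤ d := hacmem.1.2.2
  have hsmall : ∀ m, k < m → x m < b - a ∧ y m < d - c := by
    intro m hm
    constructor
    · by_contra h
      push_neg at h
      exact absurd (hkmax m (Or.inl h)) (Nat.not_le.mpr hm)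
    · by_contra h
      push_neg at h
      exact absurd (hkmax m (Or.inr h)) (Nat.not_le.mpr hm)
  -- Part 1
  obtain ⟨A, hA⟩ := hbdmem.2
  have hAx : ∑' n : A, x n = b := (congrArg Prod.fst hA).symm
  have hAy : ∑' n : A, y n = d := (congrArg Prod.snd hA).symm
  have hAzero : ∀ m ∈ A, k < m → x m = 0 ∧ y m = 0 := by
    intro m hmA hmk
    obtain ⟨hxm, hym⟩ := hsmall m hmk
    have hxA' : ∑' n : (A \ {m} : Set ℕ), x n = b - x m := by
      have := tsum_set_remove x hx hmA; linarith [hAx]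
    have hyA' : ∑' n : (A \ {m} : Set ℕ), y n = d - y m := by
      have := tsum_set_remove y hy hmA; linarith [hAy]
    have hp : ((b - x m, d - y m) : ℝ × ℝ) ∈
        (Set.Icc a b ×ˢ Set.Icc c d) ∩ achv2 x y := by
      refine ⟨⟨?_, ?_⟩, ⟨A \ {m}, by rw [hxA', hyA']⟩⟩
      · simp only [Set.mem_Icc]
        constructor <;> [linarith; linarith [hx0 m]]
      · simp only [Set.mem_Icc]
        constructor <;> [linarith; linarith [hy0 m]]
    rw [hgap] at hp
    simp only [Set.mem_insert_iff, Set.mem_singleton_iff, Prod.mk.injEq] at hp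
    rcases hp with ⟨h1, _⟩ | ⟨h1, h2⟩
    · linarith
    · constructor <;> linarith
  have hAsub : (A ∩ {n | n ≤ k} : Set ℕ) ⊆ A := Set.inter_subset_left
  have hdiffx : ∀ n ∈ A \ (A ∩ {n | n ≤ k}), x n = 0 := by
    intro n hn
    simp only [Set.mem_diff, Set.mem_inter_iff, Set.mem_setOf_eq, not_and, not_le] at hn
    exact (hAzero n hn.1 (hn.2 hn.1)).1
  have hdiffy : ∀ n ∈ A \ (A ∩ {n | n ≤ k}), y n = 0 := by
    intro n hn
    simp only [Set.mem_diff, Set.mem_inter_iff, Set.mem_setOf_eq, not_and, not_le] at hn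
    exact (hAzero n hn.1 (hn.2 hn.1)).2
  have hpart1 : (b, d) ∈ initialSubsums2 x y k := by
    refine ⟨A ∩ {n | n ≤ k}, Set.inter_subset_right, ?_⟩
    rw [tsum_set_congr_zero x hAsub hdiffx, tsum_set_congr_zero y hAsub hdiffy, hAx, hAy]
  -- Part 2
  obtain ⟨B, hB⟩ := hacmem.2
  have hBx : ∑' n : B, x n = a := (congrArg Prod.fst hB).symm
  have hBy : ∑' n : B, y n = c := (congrArg Prod.snd hB).symm
  have hBzero : ∀ m, k < m → m ∉ B → x m = 0 ∧ y m = 0 := by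
    intro m hmk hmB
    obtain ⟨hxm, hym⟩ := hsmall m hmk
    have hxB' : ∑' n : (insert m B : Set ℕ), x n = a + x m := by
      rw [tsum_set_insert x hx hmB, hBx]; ring
    have hyB' : ∑' n : (insert m B : Set ℕ), y n = c + y m := by
      rw [tsum_set_insert y hy hmB, hBy]; ring
    have hp : ((a + x m, c + y m) : ℝ × ℝ) ∈
        (Set.Icc a b ×ˢ Set.Icc c d) ∩ achv2 x y := by
      refine ⟨⟨?_, ?_⟩, ⟨insert m B, by rw [hxB', hyB']⟩⟩
      · simp only [Set.mem_Icc]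
        constructor <;> [linarith [hx0 m]; linarith]
      · simp only [Set.mem_Icc]
        constructor <;> [linarith [hy0 m]; linarith]
    rw [hgap] at hp
    simp only [Set.mem_insert_iff, Set.mem_singleton_iff, Prod.mk.injEq] at hp
    rcases hp with ⟨h1, h2⟩ | ⟨h1, _⟩
    · constructor <;> linarith
    · linarith
  -- split B
  have hBsplit : B = (B ∩ {n | n ≤ k}) ∪ (B ∩ {n | k < n}) := by
    ext n
    simp only [Set.mem_union, Set.mem_inter_iff, Set.mem_setOf_eq]
    constructor
    · intro hn
      rcases le_or_gt n k with h | h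
      · exact Or.inl ⟨hn, h⟩
      · exact Or.inr ⟨hn, h⟩
    · rintro (⟨hn, _⟩ | ⟨hn, _⟩) <;> exact hn
  have hBdisj : Disjoint (B ∩ {n | n ≤ k}) (B ∩ {n | k < n}) := by
    rw [Set.disjoint_left]
    rintro n ⟨_, h1⟩ ⟨_, h2⟩
    simp only [Set.mem_setOf_eq] at h1 h2
    omega
  have htailsub : (B ∩ {n | k < n} : Set ℕ) ⊆ {n | k < n} := Set.inter_subset_right
  have htailx : ∑' n : (B ∩ {n | k < n} : Set ℕ), x n = ∑' n : {n : ℕ | k < n}, x n := by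
    apply tsum_set_congr_zero x htailsub
    intro n hn
    simp only [Set.mem_diff, Set.mem_inter_iff, Set.mem_setOf_eq, not_and] at hn
    exact (hBzero n hn.1 (fun h => hn.2 h hn.1)).1
  have htaily : ∑' n : (B ∩ {n | k < n} : Set ℕ), y n = ∑' n : {n : ℕ | k < n}, y n := by
    apply tsum_set_congr_zero y htailsub
    intro n hn
    simp only [Set.mem_diff, Set.mem_inter_iff, Set.mem_setOf_eq, not_and] at hn
    exact (hBzero n hn.1 (fun h => hn.2 h hn.1)).2
  have hsplitx : a = (∑' n : (B ∩ {n | n ≤ k} : Set ℕ), x n) + ∑' n : {n : ℕ | k < n}, x n := by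
    rw [← htailx, ← tsum_set_union_disj x hx hBdisj, ← hBsplit, hBx]
  have hsplity : c = (∑' n : (B ∩ {n | n ≤ k} : Set ℕ), y n) + ∑' n : {n : ℕ | k < n}, y n := by
    rw [← htaily, ← tsum_set_union_disj y hy hBdisj, ← hBsplit, hBy]
  refine ⟨hpart1, (∑' n : (B ∩ {n | n ≤ k} : Set ℕ), x n,
      ∑' n : (B ∩ {n | n ≤ k} : Set ℕ), y n),
    ⟨B ∩ {n | n ≤ k}, Set.inter_subset_right, rfl⟩, ?_⟩
  rw [Prod.mk_add_mk, Prod.mk.injEq]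
  exact ⟨hsplitx, hsplity⟩
end
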